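/- arXiv:2312.10433 — 3 statements merged into one kernel-verified Lean document; each statement's English description precedes it below -/
import Mathlib

section
/- Let d ≥ 3 and let x = (x_0, x_1, …, x_d) ∈ ℂ^{d+1} be a point at which every 3×3 minor of the matrix H vanishes. If x_0 = 0, then x_1 = x_2 = ⋯ = x_{d−2} = 0. -/
/-- The `3 × d` matrix `H` of the inverse Gaussian moment variety, evaluated at a point
`x ∈ ℂ^{d+1}`: the first column is `(x₀², 0, x₁²)ᵀ` and the `c`-th column, for `2 ≤ c ≤ d`,
is `(x_{c-2}, (2c-3)·x_{c-1}, x_c)ᵀ`. -/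
def invGaussMatrixAt (d : ℕ) (x : Fin (d + 1) → ℂ) : Matrix (Fin 3) (Fin d) ℂ :=
  Matrix.of fun r c =>
    if c.val = 0 then
      ![x ⟨0, by omega⟩ ^ 2, 0, x ⟨1, by have := c.isLt; omega⟩ ^ 2] r
    else
      ![x ⟨c.val - 1, by have := c.isLt; omega⟩,
        (2 * (c.val : ℂ) - 1) * x ⟨c.val, by have := c.isLt; omega⟩,
        x ⟨c.val + 1, by have := c.isLt; omega⟩] r

/-- If every `3 × 3` minor of `H` vanishes at `x` and `x₀ = 0`, then
`x₁ = x₂ = ⋯ = x_{d-2} = 0`. -/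
theorem invGauss_vanishing_slice (d : ℕ) (hd : 3 ≤ d) (x : Fin (d + 1) → ℂ)
    (hvan : ∀ s : Fin 3 → Fin d, StrictMono s →
      ((invGaussMatrixAt d x).submatrix id s).det = 0)
    (h0 : x ⟨0, by omega⟩ = 0) :
    ∀ i : Fin (d + 1), 1 ≤ i.val → i.val ≤ d - 2 → x i = 0 := by
  have key : ∀ k : ℕ, ∀ _h1 : 1 ≤ k, ∀ _h2 : k ≤ d - 2, x ⟨k, by omega⟩ = 0 := by
    intro k
    induction k using Nat.strong_induction_on with
    | _ k ih =>
    intro h1 h2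
    rcases eq_or_lt_of_le h1 with h | h
    · -- k = 1 : minor on columns 0,1,2
      subst h
      set s : Fin 3 → Fin d := ![⟨0, by omega⟩, ⟨1, by omega⟩, ⟨2, by omega⟩] with hs_def
      have hs : StrictMono s := by
        intro a b hab
        fin_cases a <;> fin_cases b <;> simp_all [s, Fin.lt_def]
      have h := hvan s hs
      rw [Matrix.det_fin_three] at h
      have h0' : x 0 = 0 := h0
      simp [s, invGaussMatrixAt, h0, h0'] at h
      rcases h with (h | h | h) | h <;> first | exact h | norm_num at h
    · obtain ⟨m, rfl⟩ : ∃ m, k = m + 2 := ⟨k - 2, by omega⟩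
      have hm : x ⟨m, by omega⟩ = 0 := by
        rcases Nat.eq_zero_or_pos m with h' | h'
        · subst h'; exact h0
        · exact ih m (by omega) h' (by omega)
      have hm1 : x ⟨m + 1, by omega⟩ = 0 := ih (m+1) (by omega) (by omega) (by omega)
      set s : Fin 3 → Fin d := ![⟨m+1, by omega⟩, ⟨m+2, by omega⟩, ⟨m+3, by omega⟩] with hs_def
      have hs : StrictMono s := by
        intro a b hab
        fin_cases a <;> fin_cases b <;> simp_all [s, Fin.lt_def]
      have h := hvan s hs
      rw [Matrix.det_fin_three] at h
      simp [s, invGaussMatrixAt, hm, hm1] at h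
      rcases h with (h | h | h) | h
      · exact h
      · exfalso
        have h3 : ((2 * m + 3 : ℕ) : ℂ) = 0 := by push_cast; linear_combination h
        rw [Nat.cast_eq_zero] at h3
        omega
      · exact h
      · exact h
  intro i h1 h2
  have := key i.val h1 h2
  simpa using this
end

section
/- Fix d ≥ 3. In the polynomial ring R = ℂ[m_1,…,m_{d−1}], let J' be the monomial ideal generated by all monomials m_a·m_b·m_c with 1 ≤ a ≤ b < c ≤ d−1. Then every associated prime of the R-module R/J' is generated by exactly d−2 of the variables m_1,…,m_{d−1}; that is, each associated prime is of the form (m_i : i ∈ A) for some subset A ⊆ {1,…,d−1} with |A| = d−2. In particular J' is unmixed: all its associated primes have height d−2. -/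
/-!
Let `P = (J' : f)` with `f ∉ J'`. For `i < j` the generator `m_i² m_j` lies in `J' ⊆ P`, so `P`
contains all variables but at most one. It cannot contain all of them: if `m^u` is a monomial of
`f` outside `J'` and `m_i` is the largest variable dividing it, then `m_i m^u` is still outside
`J'`. So `m_i ∈ P` for `i ≠ j` and `m_j ∉ P`. Setting the other variables to zero turns any
`g ∈ P` into some `m_j^k h(m_j) ∈ P`; if this is nonzero we may take `h(0) ≠ 0`, and then
`h ∈ P`, i.e. `h f ∈ J'`. That is impossible, since an element with nonzero constant term is a
nonzerodivisor modulo every monomial ideal. Hence `P = (m_i : i ≠ j)`.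
-/

open MvPolynomial

/-- The monomial ideal `J' ⊆ ℂ[m₁,…,m_{d-1}]` generated by all monomials `m_a·m_b·m_c`
with `1 ≤ a ≤ b < c ≤ d-1` (variable `i : Fin (d-1)` corresponds to `m_{i+1}`). -/
noncomputable def gammaInitialIdeal (d : ℕ) : Ideal (MvPolynomial (Fin (d - 1)) ℂ) :=
  Ideal.span { p | ∃ a b c : Fin (d - 1), a ≤ b ∧ b < c ∧ p = X a * X b * X c }

theorem IsAssociatedPrime.exists_notMem_forall_mem_iff_mul_mem {R : Type*} [CommRing R]
    [IsNoetherianRing R] {I P : Ideal R} (hP : IsAssociatedPrime P (R ⧸ I)) :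
    ∃ f ∉ I, ∀ g, g ∈ P ↔ g * f ∈ I := by
  obtain ⟨hprime, x, hx⟩ := isAssociatedPrime_iff.mp hP
  obtain ⟨f, rfl⟩ := Ideal.Quotient.mk_surjective x
  have hmem : ∀ g, g ∈ P ↔ g * f ∈ I := fun g => by
    rw [hx, Submodule.mem_colon_singleton, Submodule.mem_bot, Algebra.smul_def,
      Ideal.Quotient.algebraMap_eq, ← map_mul, Ideal.Quotient.eq_zero_iff_mem]
  exact ⟨f, fun hf => hprime.ne_top (P.eq_top_iff_one.mpr ((hmem 1).2 (by rwa [one_mul]))),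
    hmem⟩

namespace MvPolynomial

variable {σ K : Type*} [CommRing K]

theorem mem_span_monomial_of_constantCoeff_ne_zero_of_mul_mem [NoZeroDivisors K]
    {S : Set (σ →₀ ℕ)} {h f : MvPolynomial σ K} (hh : constantCoeff h ≠ 0)
    (hhf : h * f ∈ Ideal.span ((fun s => monomial s (1 : K)) '' S)) :
    f ∈ Ideal.span ((fun s => monomial s (1 : K)) '' S) := by
  classical
  rw [mem_ideal_span_monomial_image] at hhf ⊢
  by_contra hf
  push Not at hf
  obtain ⟨u, ⟨huf, huS⟩, hmin⟩ := exists_minimal_of_wellFoundedLT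
    (fun u => u ∈ f.support ∧ ∀ s ∈ S, ¬s ≤ u) hf
  -- a term `coeff p h * coeff q f` with `p + q = u`, `p ≠ 0` would give a smaller such `q`
  have hcoeff : coeff u (h * f) = constantCoeff h * coeff u f := by
    rw [coeff_mul, Finset.sum_eq_single (0, u)]
    · rfl
    · rintro ⟨p, q⟩ hpq hne
      rw [Finset.HasAntidiagonal.mem_antidiagonal] at hpq
      by_cases hq : q ∈ f.support
      · have hqu : q ≤ u := hpq ▸ le_add_self
        have : u ≤ q := hmin ⟨hq, fun s hs hsq => huS s hs (hsq.trans hqu)⟩ hqu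
        obtain rfl : q = u := le_antisymm hqu this
        obtain rfl : p = 0 := by simpa using hpq
        exact absurd rfl hne
      · rw [notMem_support_iff.mp hq, mul_zero]
    · simp
  obtain ⟨s, hs, hsu⟩ := hhf u (mem_support_iff.mpr (by
    rw [hcoeff]; exact mul_ne_zero hh (mem_support_iff.mp huf)))
  exact huS s hs hsu

theorem constantCoeff_aeval_X (j : σ) (q : Polynomial K) :
    constantCoeff (Polynomial.aeval (X j : MvPolynomial σ K) q) = q.coeff 0 := by
  rw [Polynomial.aeval_def, Polynomial.hom_eval₂, constantCoeff_comp_algebraMap,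
    constantCoeff_X, Polynomial.coeff_zero_eq_eval_zero]
  rfl

/-- `aeval (Pi.single j Polynomial.X)` sets every variable but `X j` to zero. -/
theorem mk_aeval_X_aeval_piSingle [DecidableEq σ] {Q : Ideal (MvPolynomial σ K)} {j : σ}
    (hQ : ∀ i ≠ j, X i ∈ Q) (g : MvPolynomial σ K) :
    Ideal.Quotient.mk Q (Polynomial.aeval (X j : MvPolynomial σ K)
      (aeval (Pi.single j (Polynomial.X : Polynomial K)) g)) = Ideal.Quotient.mk Q g := by
  have : (Ideal.Quotient.mkₐ K Q).comp
      ((Polynomial.aeval (X j)).comp (aeval (Pi.single j (Polynomial.X : Polynomial K)))) =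
      Ideal.Quotient.mkₐ K Q := by
    refine algHom_ext fun i => ?_
    obtain rfl | hi := eq_or_ne i j
    · simp
    · simp [hi, Ideal.Quotient.eq_zero_iff_mem.mpr (hQ i hi)]
  exact congr($this g)

variable [IsDomain K] {S : Set (σ →₀ ℕ)} {P : Ideal (MvPolynomial σ K)} [hP : P.IsPrime]
  {f : MvPolynomial σ K}

theorem eq_zero_of_aeval_X_mem (hf : f ∉ Ideal.span ((fun s => monomial s (1 : K)) '' S))
    (hPf : ∀ g ∈ P, g * f ∈ Ideal.span ((fun s => monomial s (1 : K)) '' S)) {j : σ}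
    (hj : X j ∉ P) {p : Polynomial K} (hp : Polynomial.aeval (X j) p ∈ P) : p = 0 := by
  by_contra hp0
  obtain ⟨q, hpq, hXq⟩ := p.exists_eq_pow_rootMultiplicity_mul_and_not_dvd hp0 0
  rw [map_zero, sub_zero, Polynomial.X_dvd_iff] at hXq
  rw [hpq, map_zero, sub_zero, map_mul, map_pow, Polynomial.aeval_X] at hp
  have hq : Polynomial.aeval (X j) q ∈ P :=
    (hP.mem_or_mem hp).resolve_left fun h => hj (hP.mem_of_pow_mem _ h)
  refine hf (mem_span_monomial_of_constantCoeff_ne_zero_of_mul_mem ?_ (hPf _ hq))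
  rwa [constantCoeff_aeval_X]

theorem eq_span_X_compl_singleton (hf : f ∉ Ideal.span ((fun s => monomial s (1 : K)) '' S))
    (hPf : ∀ g ∈ P, g * f ∈ Ideal.span ((fun s => monomial s (1 : K)) '' S)) {j : σ}
    (hj : X j ∉ P) (hX : ∀ i ≠ j, X i ∈ P) : P = Ideal.span (X '' {j}ᶜ) := by
  classical
  refine le_antisymm (fun g hg => ?_) (Ideal.span_le.mpr ?_)
  · have hg0 : aeval (Pi.single j (Polynomial.X : Polynomial K)) g = 0 := by
      refine eq_zero_of_aeval_X_mem hf hPf hj ?_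
      rwa [← Ideal.Quotient.eq_zero_iff_mem, mk_aeval_X_aeval_piSingle hX,
        Ideal.Quotient.eq_zero_iff_mem]
    have hXQ : ∀ i ≠ j, X i ∈ Ideal.span (X '' {j}ᶜ : Set (MvPolynomial σ K)) :=
      fun i hi => Ideal.subset_span ⟨i, hi, rfl⟩
    rw [← Ideal.Quotient.eq_zero_iff_mem, ← mk_aeval_X_aeval_piSingle hXQ, hg0, map_zero,
      map_zero]
  · rintro _ ⟨i, hi, rfl⟩
    exact hX i hi

end MvPolynomial

def gammaExponents (n : ℕ) : Set (Fin n →₀ ℕ) :=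
  {s | ∃ a b c : Fin n, a ≤ b ∧ b < c ∧
    s = Finsupp.single a 1 + Finsupp.single b 1 + Finsupp.single c 1}

theorem gammaInitialIdeal_eq_span_monomial (d : ℕ) :
    gammaInitialIdeal d =
      Ideal.span ((fun s => monomial s (1 : ℂ)) '' gammaExponents (d - 1)) := by
  refine congrArg Ideal.span (Set.ext fun p => ⟨?_, ?_⟩)
  · rintro ⟨a, b, c, hab, hbc, rfl⟩
    exact ⟨_, ⟨a, b, c, hab, hbc, rfl⟩, by simp [X, monomial_mul]⟩
  · rintro ⟨s, ⟨a, b, c, hab, hbc, rfl⟩, rfl⟩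
    exact ⟨a, b, c, hab, hbc, by simp [X, monomial_mul]⟩

theorem X_mem_or_X_mem_of_gammaInitialIdeal_le {d : ℕ}
    {P : Ideal (MvPolynomial (Fin (d - 1)) ℂ)} [hP : P.IsPrime] (hJP : gammaInitialIdeal d ≤ P)
    {i j : Fin (d - 1)} (hij : i ≠ j) : X i ∈ P ∨ X j ∈ P := by
  have key : ∀ {a b : Fin (d - 1)}, a < b → X a ∈ P ∨ X b ∈ P := fun {a b} hab =>
    (hP.mem_or_mem (hJP (Ideal.subset_span ⟨a, a, b, le_rfl, hab, rfl⟩))).imp_left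
      fun h => (hP.mem_or_mem h).elim id id
  exact hij.lt_or_gt.elim key fun h => (key h).symm

theorem exists_forall_gammaExponents_not_le_single_add {n : ℕ} (hn : 0 < n) {u : Fin n →₀ ℕ}
    (hu : ∀ s ∈ gammaExponents n, ¬s ≤ u) :
    ∃ i, ∀ s ∈ gammaExponents n, ¬s ≤ Finsupp.single i 1 + u := by
  rcases eq_or_ne u 0 with rfl | hu0
  · refine ⟨⟨0, hn⟩, ?_⟩
    rintro _ ⟨a, b, c, -, hbc, rfl⟩ hle
    have hb := hle b
    have hc := hle c
    simp only [Finsupp.coe_add, Pi.add_apply, Finsupp.single_apply, add_zero] at hb hc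
    grind
  · obtain ⟨i, hi, hmax⟩ :=
      u.support.exists_max_image id (Finsupp.support_nonempty_iff.mpr hu0)
    refine ⟨i, ?_⟩
    rintro _ ⟨a, b, c, hab, hbc, rfl⟩ hle
    have hc : c ≤ i := by
      by_contra hci
      have := hle c
      simp only [Finsupp.coe_add, Pi.add_apply, Finsupp.single_apply] at this
      exact hci (hmax c (Finsupp.mem_support_iff.mpr (by grind)))
    have hui := Finsupp.mem_support_iff.mp hi
    refine hu _ ⟨a, b, c, hab, hbc, rfl⟩ fun x => ?_
    have := hle x
    simp only [Finsupp.coe_add, Pi.add_apply, Finsupp.single_apply] at this ⊢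
    grind

theorem exists_X_notMem_of_forall_mul_mem_gammaInitialIdeal {d : ℕ} (hd : 2 ≤ d)
    {P : Ideal (MvPolynomial (Fin (d - 1)) ℂ)} {f : MvPolynomial (Fin (d - 1)) ℂ}
    (hf : f ∉ gammaInitialIdeal d) (hPf : ∀ g ∈ P, g * f ∈ gammaInitialIdeal d) :
    ∃ j, X j ∉ P := by
  simp_rw [gammaInitialIdeal_eq_span_monomial, mem_ideal_span_monomial_image] at hf hPf
  push Not at hf
  obtain ⟨u, hu, hu_std⟩ := hf
  obtain ⟨i, hi⟩ := exists_forall_gammaExponents_not_le_single_add (by omega) hu_std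
  refine ⟨i, fun hXi => ?_⟩
  obtain ⟨s, hs, hle⟩ := hPf _ hXi (Finsupp.single i 1 + u) <| by
    rw [mem_support_iff, coeff_X_mul]
    exact mem_support_iff.mp hu
  exact hi s hs hle

/-- Every associated prime of `R/J'` is generated by exactly `d - 2` of the variables
`m₁,…,m_{d-1}`; in particular `J'` is unmixed of height `d - 2`. -/
theorem gammaInitialIdeal_unmixed (d : ℕ) (hd : 3 ≤ d)
    (P : Ideal (MvPolynomial (Fin (d - 1)) ℂ))
    (hP : IsAssociatedPrime P (MvPolynomial (Fin (d - 1)) ℂ ⧸ gammaInitialIdeal d)) :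
    ∃ A : Finset (Fin (d - 1)), A.card = d - 2 ∧
      P = Ideal.span ((fun i => (X i : MvPolynomial (Fin (d - 1)) ℂ)) '' ↑A) := by
  have := hP.isPrime
  obtain ⟨f, hf, hPf⟩ := hP.exists_notMem_forall_mem_iff_mul_mem
  have hJP : gammaInitialIdeal d ≤ P := fun g hg => (hPf g).2 (Ideal.mul_mem_right f _ hg)
  obtain ⟨j, hj⟩ :=
    exists_X_notMem_of_forall_mul_mem_gammaInitialIdeal (by omega) hf fun g => (hPf g).1
  have hX : ∀ i ≠ j, X i ∈ P := fun i hi =>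
    (X_mem_or_X_mem_of_gammaInitialIdeal_le hJP hi).resolve_right hj
  refine ⟨Finset.univ.erase j, ?_, ?_⟩
  · rw [Finset.card_erase_of_mem (Finset.mem_univ j), Finset.card_univ, Fintype.card_fin]
    omega
  · rw [Finset.coe_erase, Finset.coe_univ, ← Set.compl_eq_univ_sdiff]
    rw [gammaInitialIdeal_eq_span_monomial] at hf hPf
    exact eq_span_X_compl_singleton hf (fun g => (hPf g).1) hj hX
end

section
/- Let k ≥ 1 and let α_1,…,α_k and β_1,…,β_k be nonzero complex numbers, and let λ_1,…,λ_k be pairwise distinct complex numbers and μ_1,…,μ_k be pairwise distinct complex numbers. Suppose that the first 2k−1 mixture moments agree together with the normalization, i.e., ∑_{i=1}^{k} α_i·r!·λ_i^r = ∑_{j=1}^{k} β_j·r!·μ_j^r for every r = 0, 1, …, 2k−1. Then there is a permutation σ of {1,…,k} such that μ_{σ(i)} = λ_i and β_{σ(i)} = α_i for all i. In particular, a k-mixture of exponential distributions (with distinct rate parameters and nonzero mixture weights) is rationally identifiable from its first 2k−1 moments. -/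
/-- Rational identifiability of `k`-mixtures of exponential distributions from the first
`2k-1` moments: if two mixtures with nonzero weights and pairwise distinct parameters have
the same moments `∑ᵢ αᵢ·r!·λᵢʳ` for `r = 0, 1, …, 2k-1`, then they agree up to a
permutation of the components. -/
theorem exp_mixture_identifiability (k : ℕ) (hk : 1 ≤ k)
    (α β lam mu : Fin k → ℂ)
    (hα : ∀ i, α i ≠ 0) (hβ : ∀ i, β i ≠ 0)
    (hlam : Function.Injective lam) (hmu : Function.Injective mu)
    (h : ∀ r : ℕ, r ≤ 2 * k - 1 →
      ∑ i, α i * (Nat.factorial r : ℂ) * lam i ^ r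
        = ∑ j, β j * (Nat.factorial r : ℂ) * mu j ^ r) :
    ∃ σ : Equiv.Perm (Fin k), ∀ i, mu (σ i) = lam i ∧ β (σ i) = α i := by
  classical
  -- cancel the factorial
  have h' : ∀ r : ℕ, r ≤ 2 * k - 1 →
      ∑ i, α i * lam i ^ r = ∑ j, β j * mu j ^ r := by
    intro r hr
    have := h r hr
    have hfac : (Nat.factorial r : ℂ) ≠ 0 := Nat.cast_ne_zero.mpr (Nat.factorial_ne_zero r)
    apply mul_left_cancel₀ hfac
    rw [Finset.mul_sum, Finset.mul_sum]
    simpa [mul_comm, mul_assoc, mul_left_comm] using this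
  set S : Finset ℂ := (Finset.image lam Finset.univ) ∪ (Finset.image mu Finset.univ) with hS
  have hcard : S.card ≤ 2 * k := by
    calc S.card ≤ (Finset.image lam Finset.univ).card + (Finset.image mu Finset.univ).card :=
          Finset.card_union_le _ _
      _ ≤ k + k := by
          gcongr <;> exact Finset.card_image_le.trans (by simp)
      _ = 2 * k := by ring
  set c : ℂ → ℂ := fun x =>
    (∑ i ∈ Finset.univ.filter fun i => lam i = x, α i)
      - ∑ j ∈ Finset.univ.filter fun j => mu j = x, β j with hc
  have key : ∀ r : ℕ, r ≤ 2 * k - 1 → ∑ x ∈ S, c x * x ^ r = 0 := by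
    intro r hr
    have h1 : ∑ x ∈ S, (∑ i ∈ Finset.univ.filter fun i => lam i = x, α i) * x ^ r
        = ∑ i, α i * lam i ^ r := by
      rw [← Finset.sum_fiberwise_of_maps_to (g := lam)
        (fun i _ => Finset.mem_union_left _ (Finset.mem_image_of_mem lam (Finset.mem_univ i)))
        (fun i => α i * lam i ^ r)]
      refine Finset.sum_congr rfl fun x _ => ?_
      rw [Finset.sum_mul]
      refine Finset.sum_congr rfl fun i hi => ?_
      rw [(Finset.mem_filter.mp hi).2]
    have h2 : ∑ x ∈ S, (∑ j ∈ Finset.univ.filter fun j => mu j = x, β j) * x ^ r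
        = ∑ j, β j * mu j ^ r := by
      rw [← Finset.sum_fiberwise_of_maps_to (g := mu)
        (fun j _ => Finset.mem_union_right _ (Finset.mem_image_of_mem mu (Finset.mem_univ j)))
        (fun j => β j * mu j ^ r)]
      refine Finset.sum_congr rfl fun x _ => ?_
      rw [Finset.sum_mul]
      refine Finset.sum_congr rfl fun j hj => ?_
      rw [(Finset.mem_filter.mp hj).2]
    simp only [hc, sub_mul, Finset.sum_sub_distrib, h1, h2, h' r hr, sub_self]
  -- Vandermonde: c vanishes on S
  have hczero : ∀ x ∈ S, c x = 0 := by
    set n := S.card with hn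
    set e : Fin n → ℂ := fun t => (S.equivFin.symm t : ℂ) with he
    have he_inj : Function.Injective e := fun a b hab => by
      apply S.equivFin.symm.injective
      exact Subtype.ext hab
    have hw : (fun t => c (e t)) = 0 := by
      apply Matrix.eq_zero_of_forall_pow_sum_mul_pow_eq_zero he_inj
      intro i
      have : ∑ x ∈ S, c x * x ^ (i : ℕ) = 0 := by
        apply key
        omega
      rw [← this, ← Finset.sum_coe_sort S (fun x => c x * x ^ (i : ℕ))]
      exact Fintype.sum_equiv S.equivFin.symm
        (fun t => c (e t) * e t ^ (i : ℕ)) (fun a => c (a : ℂ) * (a : ℂ) ^ (i : ℕ))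
        (fun t => rfl)
    intro x hx
    have := congrFun hw (S.equivFin ⟨x, hx⟩)
    simpa [he] using this
  -- extract the matching
  have hmatch : ∀ i : Fin k, ∃ j : Fin k, mu j = lam i ∧ β j = α i := by
    intro i
    have hmem : lam i ∈ S := by simp [hS]
    have h0 := hczero (lam i) hmem
    have hfilt : Finset.univ.filter (fun i' => lam i' = lam i) = {i} := by
      ext i'
      simp [hlam.eq_iff, eq_comm]
    rw [hc] at h0
    simp only [hfilt, Finset.sum_singleton, sub_eq_zero] at h0
    -- h0 : α i = ∑ j ∈ filter (mu · = lam i), β j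
    have hne : (Finset.univ.filter fun j => mu j = lam i).Nonempty := by
      by_contra hemp
      rw [Finset.not_nonempty_iff_eq_empty] at hemp
      rw [hemp, Finset.sum_empty] at h0
      exact hα i h0
    obtain ⟨j, hj⟩ := hne
    have hjm : mu j = lam i := (Finset.mem_filter.mp hj).2
    have hfilt2 : Finset.univ.filter (fun j' => mu j' = lam i) = {j} := by
      ext j'
      simp only [Finset.mem_filter, Finset.mem_univ, true_and, Finset.mem_singleton]
      constructor
      · intro hj'; exact hmu (hj'.trans hjm.symm)
      · rintro rfl; exact hjm
    rw [hfilt2, Finset.sum_singleton] at h0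
    exact ⟨j, hjm, h0.symm⟩
  choose f hf1 hf2 using hmatch
  have hfinj : Function.Injective f := fun i1 i2 h12 =>
    hlam (by rw [← hf1, ← hf1, h12])
  exact ⟨Equiv.ofBijective f (Finite.injective_iff_bijective.mp hfinj),
    fun i => ⟨hf1 i, hf2 i⟩⟩
end
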